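/- Let d = ℓ + m, ν > 0, μ = (μ₁, μ₂) ∈ ℝ^ℓ × ℝ^m, and Σ ∈ ℝ^{d×d} positive definite with block decomposition Σ = [[Σ₁₁, Σ₁₂], [Σ₂₁, Σ₂₂]]. For x₂ ∈ ℝ^m set μ_{1.2} = μ₁ + Σ₁₂ Σ₂₂⁻¹ (x₂ − μ₂), Σ_{11.2} = Σ₁₁ − Σ₁₂ Σ₂₂⁻¹ Σ₂₁, and d₂ = (x₂ − μ₂)ᵗ Σ₂₂⁻¹ (x₂ − μ₂). Then for every x₁ ∈ ℝ^ℓ, f_d((x₁, x₂); μ, Σ, ν) / f_m(x₂; μ₂, Σ₂₂, ν) = f_ℓ(x₁; μ_{1.2}, ((ν + d₂)/(ν + m)) Σ_{11.2}, ν + m). That is, the conditional distribution of the first ℓ coordinates of a t_d(μ, Σ, ν) vector given that the last m coordinates equal x₂ is the multivariate Student t-distribution t_ℓ(μ_{1.2}, ((ν + d₂)/(ν + m)) Σ_{11.2}, ν + m); in particular the degrees of freedom change from ν to ν + m under conditioning. -/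

import Mathlib

open MeasureTheory Matrix

/-- Multivariate Student `t` density with location `μ`, scale `Σ` and `ν` degrees of freedom. -/
noncomputable def studentPdf {ι : Type*} [Fintype ι] [DecidableEq ι]
    (μ : ι → ℝ) (S : Matrix ι ι ℝ) (ν : ℝ) (x : ι → ℝ) : ℝ :=
  Real.Gamma ((ν + Fintype.card ι) / 2) /
      (Real.Gamma (ν / 2) * (ν * Real.pi) ^ ((Fintype.card ι : ℝ) / 2) *
        S.det ^ ((1 : ℝ) / 2)) *
    (1 + ν⁻¹ * ((x - μ) ⬝ᵥ S⁻¹ *ᵥ (x - μ))) ^ (-(ν + Fintype.card ι) / 2)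


private lemma studentPdf_scalar_key (ν lr mr D2 DW d₂ q₁ : ℝ) (hν : 0 < ν)
    (hD2 : 0 < D2) (hDW : 0 < DW) (hd₂ : 0 ≤ d₂) (hq₁ : 0 ≤ q₁)
    (hlr : 0 ≤ lr) (hmr : 0 ≤ mr) :
    Real.Gamma ((ν + mr + lr) / 2) /
          (Real.Gamma (ν / 2) * (ν * Real.pi) ^ ((lr + mr) / 2) * (D2 * DW) ^ ((1 : ℝ) / 2)) *
        ((ν + (d₂ + q₁)) / ν) ^ (-(ν + (lr + mr)) / 2) /
      (Real.Gamma ((ν + mr) / 2) /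
          (Real.Gamma (ν / 2) * (ν * Real.pi) ^ (mr / 2) * D2 ^ ((1 : ℝ) / 2)) *
        ((ν + d₂) / ν) ^ (-(ν + mr) / 2)) =
    Real.Gamma ((ν + mr + lr) / 2) /
        (Real.Gamma ((ν + mr) / 2) * ((ν + mr) * Real.pi) ^ (lr / 2) *
          (((ν + d₂) / (ν + mr)) ^ lr * DW) ^ ((1 : ℝ) / 2)) *
      ((ν + (d₂ + q₁)) / (ν + d₂)) ^ (-(ν + mr + lr) / 2) := by
  have hπ := Real.pi_pos
  have hG0 : 0 < Real.Gamma (ν / 2) := Real.Gamma_pos_of_pos (by positivity)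
  have hGm : 0 < Real.Gamma ((ν + mr) / 2) := Real.Gamma_pos_of_pos (by positivity)
  have hGd : 0 < Real.Gamma ((ν + mr + lr) / 2) := Real.Gamma_pos_of_pos (by positivity)
  have hL : 0 < Real.Gamma ((ν + mr + lr) / 2) /
          (Real.Gamma (ν / 2) * (ν * Real.pi) ^ ((lr + mr) / 2) * (D2 * DW) ^ ((1 : ℝ) / 2)) *
        ((ν + (d₂ + q₁)) / ν) ^ (-(ν + (lr + mr)) / 2) /
      (Real.Gamma ((ν + mr) / 2) /
          (Real.Gamma (ν / 2) * (ν * Real.pi) ^ (mr / 2) * D2 ^ ((1 : ℝ) / 2)) *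
        ((ν + d₂) / ν) ^ (-(ν + mr) / 2)) := by positivity
  have hR : 0 < Real.Gamma ((ν + mr + lr) / 2) /
        (Real.Gamma ((ν + mr) / 2) * ((ν + mr) * Real.pi) ^ (lr / 2) *
          (((ν + d₂) / (ν + mr)) ^ lr * DW) ^ ((1 : ℝ) / 2)) *
      ((ν + (d₂ + q₁)) / (ν + d₂)) ^ (-(ν + mr + lr) / 2) := by positivity
  have hlog : Real.log (Real.Gamma ((ν + mr + lr) / 2) /
          (Real.Gamma (ν / 2) * (ν * Real.pi) ^ ((lr + mr) / 2) * (D2 * DW) ^ ((1 : ℝ) / 2)) *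
        ((ν + (d₂ + q₁)) / ν) ^ (-(ν + (lr + mr)) / 2) /
      (Real.Gamma ((ν + mr) / 2) /
          (Real.Gamma (ν / 2) * (ν * Real.pi) ^ (mr / 2) * D2 ^ ((1 : ℝ) / 2)) *
        ((ν + d₂) / ν) ^ (-(ν + mr) / 2))) =
      Real.log (Real.Gamma ((ν + mr + lr) / 2) /
        (Real.Gamma ((ν + mr) / 2) * ((ν + mr) * Real.pi) ^ (lr / 2) *
          (((ν + d₂) / (ν + mr)) ^ lr * DW) ^ ((1 : ℝ) / 2)) *
      ((ν + (d₂ + q₁)) / (ν + d₂)) ^ (-(ν + mr + lr) / 2)) := by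
    simp (disch := positivity) only [Real.log_div, Real.log_mul, Real.log_rpow]
    ring
  exact Real.log_injOn_pos (Set.mem_Ioi.2 hL) (Set.mem_Ioi.2 hR) hlog

/-- **Conditioning the multivariate Student t-distribution.**  For a positive definite block
matrix `Σ` and `μ = (μ₁, μ₂)`, the conditional density of the first `ℓ` coordinates of a
`t_d(μ, Σ, ν)` vector given the last `m` coordinates equal `x₂` is the Student `t` density with
location `μ_{1.2} = μ₁ + Σ₁₂Σ₂₂⁻¹(x₂ − μ₂)`, scale `((ν + d₂)/(ν + m)) Σ_{11.2}` where
`d₂ = (x₂ − μ₂)ᵗΣ₂₂⁻¹(x₂ − μ₂)` and `Σ_{11.2} = Σ₁₁ − Σ₁₂Σ₂₂⁻¹Σ₂₁`, and `ν + m` degrees of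
freedom; in particular the degrees of freedom change under conditioning. -/
theorem stmt_9 {l m : ℕ} (ν : ℝ) (hν : 0 < ν)
    (μ₁ : Fin l → ℝ) (μ₂ : Fin m → ℝ)
    (S11 : Matrix (Fin l) (Fin l) ℝ) (S12 : Matrix (Fin l) (Fin m) ℝ)
    (S21 : Matrix (Fin m) (Fin l) ℝ) (S22 : Matrix (Fin m) (Fin m) ℝ)
    (hS : (Matrix.fromBlocks S11 S12 S21 S22).PosDef)
    (x₁ : Fin l → ℝ) (x₂ : Fin m → ℝ) :
    studentPdf (Sum.elim μ₁ μ₂) (Matrix.fromBlocks S11 S12 S21 S22) ν (Sum.elim x₁ x₂) /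
        studentPdf μ₂ S22 ν x₂ =
      studentPdf (μ₁ + S12 *ᵥ S22⁻¹ *ᵥ (x₂ - μ₂))
        (((ν + (x₂ - μ₂) ⬝ᵥ S22⁻¹ *ᵥ (x₂ - μ₂)) / (ν + m)) • (S11 - S12 * S22⁻¹ * S21))
        (ν + m) x₁ := by
  -- block symmetry
  have hT : Matrix.fromBlocks S11ᵀ S21ᵀ S12ᵀ S22ᵀ = Matrix.fromBlocks S11 S12 S21 S22 := by
    rw [← Matrix.fromBlocks_transpose]
    exact (show (Matrix.fromBlocks S11 S12 S21 S22).IsSymm by simpa using hS.1).eq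
  have h11 : S11ᵀ = S11 := by simpa using congrArg Matrix.toBlocks₁₁ hT
  have h21 : S12ᵀ = S21 := by simpa using congrArg Matrix.toBlocks₂₁ hT
  have h12 : S21ᵀ = S12 := by simpa using congrArg Matrix.toBlocks₁₂ hT
  have h22 : S22ᵀ = S22 := by simpa using congrArg Matrix.toBlocks₂₂ hT
  -- S22 pos def
  have hS22 : S22.PosDef := by
    refine Matrix.PosDef.of_dotProduct_mulVec_pos (by rw [Matrix.IsHermitian]; simpa using h22) fun y hy => ?_
    have hne : Sum.elim (0 : Fin l → ℝ) y ≠ 0 := by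
      intro hc; apply hy; funext i; simpa using congrFun hc (Sum.inr i)
    have := hS.dotProduct_mulVec_pos hne
    simpa [Matrix.fromBlocks_mulVec, sumElim_dotProduct_sumElim] using this
  haveI : Invertible S22 := hS22.isUnit.invertible
  -- Schur complement pos def
  set W := S11 - S12 * S22⁻¹ * S21 with hWdef
  have hWsym : Wᵀ = W := by
    rw [hWdef, Matrix.transpose_sub, h11, Matrix.transpose_mul, Matrix.transpose_mul,
      Matrix.transpose_nonsing_inv, h22, h12, h21, Matrix.mul_assoc]
  have hW : W.PosDef := by
    refine Matrix.PosDef.of_dotProduct_mulVec_pos (by rw [Matrix.IsHermitian]; simpa using hWsym) fun e he => ?_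
    set g : Fin m → ℝ := -(S22⁻¹ *ᵥ (S21 *ᵥ e)) with hg
    have hne : Sum.elim e g ≠ 0 := by
      intro hc; apply he; funext i; simpa using congrFun hc (Sum.inl i)
    have h2 := hS.dotProduct_mulVec_pos hne
    have hSg : S22 *ᵥ g = -(S21 *ᵥ e) := by
      rw [hg, Matrix.mulVec_neg, Matrix.mulVec_mulVec, Matrix.mul_inv_of_invertible,
        Matrix.one_mulVec]
    have hq : Sum.elim e g ⬝ᵥ (Matrix.fromBlocks S11 S12 S21 S22) *ᵥ Sum.elim e g
        = e ⬝ᵥ W *ᵥ e := by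
      simp only [Matrix.fromBlocks_mulVec, Sum.elim_comp_inl, Sum.elim_comp_inr]
      rw [hSg, add_neg_cancel, sumElim_dotProduct_sumElim, dotProduct_zero,
        add_zero, hWdef, Matrix.sub_mulVec, hg]
      simp [Matrix.mulVec_neg, Matrix.mulVec_mulVec, dotProduct_sub, Matrix.mul_assoc,
        sub_eq_add_neg]
    simpa [hq] using h2
  haveI : Invertible W := hW.isUnit.invertible
  have hW' : S11 - S12 * ⅟S22 * S21 = W := by rw [invOf_eq_nonsing_inv, hWdef]
  haveI : Invertible (S11 - S12 * ⅟S22 * S21) := hW' ▸ ‹Invertible W›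
  haveI : Invertible (Matrix.fromBlocks S11 S12 S21 S22) :=
    Matrix.fromBlocks₂₂Invertible S11 S12 S21 S22
  -- block inverse
  have hinv : (Matrix.fromBlocks S11 S12 S21 S22)⁻¹ =
      Matrix.fromBlocks W⁻¹ (-(W⁻¹ * S12 * S22⁻¹)) (-(S22⁻¹ * S21 * W⁻¹))
        (S22⁻¹ + S22⁻¹ * S21 * W⁻¹ * S12 * S22⁻¹) := by
    rw [← Matrix.invOf_eq_nonsing_inv, Matrix.invOf_fromBlocks₂₂_eq]
    simp only [Matrix.invOf_eq_nonsing_inv, hW', ← hWdef]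
  -- determinant
  have hdet : (Matrix.fromBlocks S11 S12 S21 S22).det = S22.det * W.det := by
    rw [Matrix.det_fromBlocks₂₂]
    simp only [Matrix.invOf_eq_nonsing_inv, hW', ← hWdef]
  -- vectors
  set a : Fin l → ℝ := x₁ - μ₁ with hadef
  set b : Fin m → ℝ := x₂ - μ₂ with hbdef
  set p : Fin l → ℝ := S12 *ᵥ S22⁻¹ *ᵥ b with hp
  have hsub1 : Sum.elim x₁ x₂ - Sum.elim μ₁ μ₂ = Sum.elim a b := by
    funext i; cases i <;> simp [hadef, hbdef]
  have hsub2 : x₁ - (μ₁ + S12 *ᵥ S22⁻¹ *ᵥ (x₂ - μ₂)) = a - p := by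
    funext i; simp [hadef, hp, hbdef]; ring
  -- transposition facts
  have hWinvsym : W⁻¹ᵀ = W⁻¹ := by rw [Matrix.transpose_nonsing_inv, hWsym]
  have h22inv : S22⁻¹ᵀ = S22⁻¹ := by rw [Matrix.transpose_nonsing_inv, h22]
  -- quadratic form decomposition
  have key : ∀ (M : Matrix (Fin m) (Fin l) ℝ) (v : Fin m → ℝ) (w : Fin l → ℝ),
      v ⬝ᵥ M *ᵥ w = (Mᵀ *ᵥ v) ⬝ᵥ w := by
    intro M v w
    rw [Matrix.dotProduct_mulVec, Matrix.mulVec_transpose]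
  have hquad : Sum.elim a b ⬝ᵥ (Matrix.fromBlocks S11 S12 S21 S22)⁻¹ *ᵥ Sum.elim a b
      = b ⬝ᵥ S22⁻¹ *ᵥ b + (a - p) ⬝ᵥ W⁻¹ *ᵥ (a - p) := by
    rw [hinv]
    simp only [Matrix.fromBlocks_mulVec, Sum.elim_comp_inl, Sum.elim_comp_inr,
      sumElim_dotProduct_sumElim, Matrix.neg_mulVec, Matrix.add_mulVec,
      dotProduct_add, dotProduct_neg, ← Matrix.mulVec_mulVec]
    have t23 : ∀ u : Fin l → ℝ, b ⬝ᵥ S22⁻¹ *ᵥ S21 *ᵥ u = p ⬝ᵥ u := by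
      intro u
      rw [Matrix.mulVec_mulVec, key, Matrix.transpose_mul, h12, h22inv,
        ← Matrix.mulVec_mulVec, ← hp]
    rw [← hp, t23 (W⁻¹ *ᵥ a), t23 (W⁻¹ *ᵥ p)]
    simp only [Matrix.mulVec_sub, sub_dotProduct, dotProduct_sub]
    ring
  -- positivity of scalars
  set d₂ : ℝ := b ⬝ᵥ S22⁻¹ *ᵥ b with hd2
  set q₁ : ℝ := (a - p) ⬝ᵥ W⁻¹ *ᵥ (a - p) with hq1
  have hd₂0 : 0 ≤ d₂ := by
    rcases eq_or_ne b 0 with hb0 | hb0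
    · simp [hd2, hb0]
    · exact le_of_lt (by simpa only [star_trivial] using hS22.inv.dotProduct_mulVec_pos hb0)
  have hq₁0 : 0 ≤ q₁ := by
    rcases eq_or_ne (a - p) 0 with hb0 | hb0
    · simp [hq1, hb0]
    · exact le_of_lt (by simpa only [star_trivial] using hW.inv.dotProduct_mulVec_pos hb0)
  -- scale matrix facts
  set c : ℝ := (ν + d₂) / (ν + (m : ℝ)) with hc
  have hνm : (0 : ℝ) < ν + m := by positivity
  have hcpos : 0 < c := by rw [hc]; positivity
  haveI : Invertible c := invertibleOfNonzero hcpos.ne'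
  have hsmul_inv : (c • W)⁻¹ = c⁻¹ • W⁻¹ := by
    rw [Matrix.inv_smul W c (Matrix.isUnit_det_of_invertible W), invOf_eq_inv]
  have hdetsmul : (c • W).det = c ^ l * W.det := by
    rw [Matrix.det_smul, Fintype.card_fin]
  have hqsmul : (a - p) ⬝ᵥ (c⁻¹ • W⁻¹) *ᵥ (a - p) = c⁻¹ * q₁ := by
    rw [Matrix.smul_mulVec, dotProduct_smul, hq1, smul_eq_mul]
  have hA : (0 : ℝ) < ν + d₂ := by positivity
  have r1 : (1 : ℝ) + ν⁻¹ * (d₂ + q₁) = (ν + (d₂ + q₁)) / ν := by field_simp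
  have r2 : (1 : ℝ) + ν⁻¹ * d₂ = (ν + d₂) / ν := by field_simp
  have r3 : (1 : ℝ) + (ν + (m : ℝ))⁻¹ * (c⁻¹ * q₁) = (ν + (d₂ + q₁)) / (ν + d₂) := by
    rw [hc]
    field_simp
    ring
  simp only [studentPdf, hsub1, hsub2, hquad, hdet, hsmul_inv, hdetsmul, hqsmul,
    Fintype.card_sum, Fintype.card_fin, ← hd2, ← hq1]
  push_cast
  rw [show (ν + ((l : ℝ) + (m : ℝ))) / 2 = (ν + (m : ℝ) + (l : ℝ)) / 2 by ring,
    r1, r2, show x₁ - (μ₁ + p) = a - p from hsub2, hqsmul, r3, ← Real.rpow_natCast c l, hc]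
  exact studentPdf_scalar_key ν (l : ℝ) (m : ℝ) S22.det W.det d₂ q₁ hν hS22.det_pos
    hW.det_pos hd₂0 hq₁0 (by positivity) (by positivity)
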